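/- arXiv:1112.5792 — 2 statements merged into one kernel-verified Lean document; each statement's English description precedes it below -/
import Mathlib

section
/- Let H and K be real inner product spaces, let F : H × K → H and G : H → H, let μ, ν ∈ ℝ, ℓ ≥ 0, α ∈ [0,1] and a > 0, and define Φ : H × K → H by Φ(y,z) = α • F(y,z) + (1−α) • G(y). Assume ⟨y′−y, F(y′,z)−F(y,z)⟩ ≤ μ‖y′−y‖² for all y,y′ ∈ H, z ∈ K; ⟨y′−y, G(y′)−G(y)⟩ ≤ ν‖y′−y‖² for all y,y′ ∈ H; and ‖F(y,z′)−F(y,z)‖ ≤ ℓ‖z′−z‖ for all y ∈ H, z,z′ ∈ K. Then for all y ∈ H and z ∈ K: ⟨y, Φ(y,z)⟩ ≤ ‖y‖·‖Φ(0,0)‖ + ((μ + (a/2)ℓ²)α + ν(1−α))‖y‖² + (α/(2a))‖z‖². -/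
open scoped RealInnerProductSpace

theorem mul_mul_le_half_mul_sq_add_sq_div {ℓ x w a : ℝ} (ha : 0 < a) :
    ℓ * x * w ≤ a / 2 * ℓ ^ 2 * x ^ 2 + 1 / (2 * a) * w ^ 2 := by
  have hsq : 0 ≤ (a * ℓ * x - w) ^ 2 / (2 * a) := by positivity
  have hexpand : (a * ℓ * x - w) ^ 2 / (2 * a)
      = a / 2 * ℓ ^ 2 * x ^ 2 + 1 / (2 * a) * w ^ 2 - ℓ * x * w := by
    field_simp
    ring
  linarith

theorem inner_sub_apply_zero_le {H K : Type*} [NormedAddCommGroup H] [InnerProductSpace ℝ H]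
    [NormedAddCommGroup K] {F : H × K → H} {μ ℓ a : ℝ} (ha : 0 < a)
    (hF_mono : ∀ y y' z, ⟪y' - y, F (y', z) - F (y, z)⟫ ≤ μ * ‖y' - y‖ ^ 2)
    (hF_lip : ∀ y z z', ‖F (y, z') - F (y, z)‖ ≤ ℓ * ‖z' - z‖) (y : H) (z : K) :
    ⟪y, F (y, z) - F (0, 0)⟫ ≤ (μ + a / 2 * ℓ ^ 2) * ‖y‖ ^ 2 + 1 / (2 * a) * ‖z‖ ^ 2 := by
  have hmono : ⟪y, F (y, 0) - F (0, 0)⟫ ≤ μ * ‖y‖ ^ 2 := by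
    simpa using hF_mono 0 y 0
  have hlip : ⟪y, F (y, z) - F (y, 0)⟫ ≤ ℓ * ‖y‖ * ‖z‖ :=
    calc ⟪y, F (y, z) - F (y, 0)⟫ ≤ ‖y‖ * ‖F (y, z) - F (y, 0)‖ := real_inner_le_norm _ _
      _ ≤ ‖y‖ * (ℓ * ‖z‖) := by
          gcongr
          simpa using hF_lip y 0 z
      _ = ℓ * ‖y‖ * ‖z‖ := by ring
  have hsplit : F (y, z) - F (0, 0) = (F (y, z) - F (y, 0)) + (F (y, 0) - F (0, 0)) := by abel
  rw [hsplit, inner_add_right]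
  linarith [mul_mul_le_half_mul_sq_add_sq_div (ℓ := ℓ) (x := ‖y‖) (w := ‖z‖) ha]

theorem a_priori_estimate_one_general
    {H K : Type*} [NormedAddCommGroup H] [InnerProductSpace ℝ H]
    [NormedAddCommGroup K]
    (F : H × K → H) (G : H → H) (μ ν ℓ α a : ℝ)
    (hα0 : 0 ≤ α) (hα1 : α ≤ 1) (ha : 0 < a)
    (Φ : H × K → H)
    (hΦ : ∀ y z, Φ (y, z) = α • F (y, z) + (1 - α) • G y)
    (hF_mono : ∀ y y' z, (inner ℝ (y' - y) (F (y', z) - F (y, z)) : ℝ) ≤ μ * ‖y' - y‖ ^ 2)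
    (hG_mono : ∀ y y', (inner ℝ (y' - y) (G y' - G y) : ℝ) ≤ ν * ‖y' - y‖ ^ 2)
    (hF_lip : ∀ y z z', ‖F (y, z') - F (y, z)‖ ≤ ℓ * ‖z' - z‖) :
    ∀ y : H, ∀ z : K,
      (inner ℝ y (Φ (y, z)) : ℝ) ≤
        ‖y‖ * ‖Φ (0, 0)‖ + ((μ + a / 2 * ℓ ^ 2) * α + ν * (1 - α)) * ‖y‖ ^ 2
          + α / (2 * a) * ‖z‖ ^ 2 := by
  intro y z
  have hG : ⟪y, G y - G 0⟫ ≤ ν * ‖y‖ ^ 2 := by simpa using hG_mono 0 y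
  have hΦ_sub : Φ (y, z) = α • (F (y, z) - F (0, 0)) + (1 - α) • (G y - G 0) + Φ (0, 0) := by
    rw [hΦ, hΦ]
    module
  have hα1' : 0 ≤ 1 - α := sub_nonneg.2 hα1
  calc ⟪y, Φ (y, z)⟫
      = α * ⟪y, F (y, z) - F (0, 0)⟫ + (1 - α) * ⟪y, G y - G 0⟫ + ⟪y, Φ (0, 0)⟫ := by
        rw [hΦ_sub]
        simp only [inner_add_right, inner_smul_right]
    _ ≤ α * ((μ + a / 2 * ℓ ^ 2) * ‖y‖ ^ 2 + 1 / (2 * a) * ‖z‖ ^ 2)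
          + (1 - α) * (ν * ‖y‖ ^ 2) + ‖y‖ * ‖Φ (0, 0)‖ := by
        gcongr
        · exact inner_sub_apply_zero_le ha hF_mono hF_lip y z
        · exact real_inner_le_norm _ _
    _ = _ := by ring

theorem a_priori_estimate_one
    {H K : Type*} [NormedAddCommGroup H] [InnerProductSpace ℝ H]
    [NormedAddCommGroup K] [InnerProductSpace ℝ K]
    (F : H × K → H) (G : H → H) (μ ν ℓ α a : ℝ)
    (hℓ : 0 ≤ ℓ) (hα0 : 0 ≤ α) (hα1 : α ≤ 1) (ha : 0 < a)
    (Φ : H × K → H)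
    (hΦ : ∀ y z, Φ (y, z) = α • F (y, z) + (1 - α) • G y)
    (hF_mono : ∀ y y' z, (inner ℝ (y' - y) (F (y', z) - F (y, z)) : ℝ) ≤ μ * ‖y' - y‖ ^ 2)
    (hG_mono : ∀ y y', (inner ℝ (y' - y) (G y' - G y) : ℝ) ≤ ν * ‖y' - y‖ ^ 2)
    (hF_lip : ∀ y z z', ‖F (y, z') - F (y, z)‖ ≤ ℓ * ‖z' - z‖) :
    ∀ y : H, ∀ z : K,
      (inner ℝ y (Φ (y, z)) : ℝ) ≤
        ‖y‖ * ‖Φ (0, 0)‖ + ((μ + a / 2 * ℓ ^ 2) * α + ν * (1 - α)) * ‖y‖ ^ 2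
          + α / (2 * a) * ‖z‖ ^ 2 :=
  a_priori_estimate_one_general F G μ ν ℓ α a hα0 hα1 ha Φ hΦ hF_mono hG_mono hF_lip
end

section
/- Let H and K be real inner product spaces, let F : H × K → H and G : H → H, let μ, ν ∈ ℝ, ℓ ≥ 0, α ∈ [0,1] and a > 0, and define Φ : H × K → H by Φ(y,z) = α • F(y,z) + (1−α) • G(y). Assume ⟨y′−y, F(y′,z)−F(y,z)⟩ ≤ μ‖y′−y‖² for all y,y′ ∈ H, z ∈ K; ⟨y′−y, G(y′)−G(y)⟩ ≤ ν‖y′−y‖² for all y,y′ ∈ H; and ‖F(y,z′)−F(y,z)‖ ≤ ℓ‖z′−z‖ for all y ∈ H, z,z′ ∈ K. Then for all y, ỹ ∈ H and z, z̃ ∈ K: ⟨y−ỹ, Φ(y,z)−Φ(ỹ,z̃)⟩ ≤ ((μ + (a/2)ℓ²)α + ν(1−α))‖y−ỹ‖² + (α/(2a))‖z−z̃‖². -/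
/-!
Split `Φ(y,z) - Φ(ỹ,z̃)` into `α • (F(y,z) - F(ỹ,z̃)) + (1 - α) • (G y - G ỹ)`. The `G` part is
bounded by one-sided monotonicity. For `F`, pass through `F(ỹ,z)`: the step in `y` is bounded by
one-sided monotonicity, the step in `z` by Cauchy–Schwarz, the Lipschitz bound and Young's inequality
`x y ≤ (a/2) x² + y²/(2a)`.
-/

theorem mul_le_half_mul_sq_add_sq_div {a : ℝ} (ha : 0 < a) (x y : ℝ) :
    x * y ≤ a / 2 * x ^ 2 + 1 / (2 * a) * y ^ 2 := by
  have hsq : a / 2 * x ^ 2 + 1 / (2 * a) * y ^ 2 - x * y = (a * x - y) ^ 2 / (2 * a) := by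
    field_simp
    ring
  have : 0 ≤ (a * x - y) ^ 2 / (2 * a) := by positivity
  linarith

theorem real_inner_convex_combination_le {E : Type*} [NormedAddCommGroup E]
    [InnerProductSpace ℝ E] {α A B : ℝ} (hα0 : 0 ≤ α) (hα1 : α ≤ 1) {u p q : E}
    (hp : inner ℝ u p ≤ A) (hq : inner ℝ u q ≤ B) :
    inner ℝ u (α • p + (1 - α) • q) ≤ α * A + (1 - α) * B := by
  rw [inner_add_right, real_inner_smul_right, real_inner_smul_right]
  gcongr

section

variable {H K : Type*} [NormedAddCommGroup H] [InnerProductSpace ℝ H] [SeminormedAddCommGroup K]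

theorem real_inner_le_of_lipschitz_snd {F : H × K → H} {ℓ a : ℝ} (ha : 0 < a)
    (hF_lip : ∀ y z z', ‖F (y, z') - F (y, z)‖ ≤ ℓ * ‖z' - z‖) (u y : H) (z z' : K) :
    inner ℝ u (F (y, z') - F (y, z)) ≤ a / 2 * ℓ ^ 2 * ‖u‖ ^ 2 + 1 / (2 * a) * ‖z' - z‖ ^ 2 :=
  calc inner ℝ u (F (y, z') - F (y, z))
      ≤ ‖u‖ * ‖F (y, z') - F (y, z)‖ := real_inner_le_norm _ _
    _ ≤ ‖u‖ * (ℓ * ‖z' - z‖) := by gcongr; exact hF_lip y z z'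
    _ = (ℓ * ‖u‖) * ‖z' - z‖ := by ring
    _ ≤ a / 2 * (ℓ * ‖u‖) ^ 2 + 1 / (2 * a) * ‖z' - z‖ ^ 2 := mul_le_half_mul_sq_add_sq_div ha _ _
    _ = a / 2 * ℓ ^ 2 * ‖u‖ ^ 2 + 1 / (2 * a) * ‖z' - z‖ ^ 2 := by ring

theorem real_inner_sub_le_of_monotone_fst_of_lipschitz_snd {F : H × K → H} {μ ℓ a : ℝ}
    (ha : 0 < a)
    (hF_mono : ∀ y y' z, inner ℝ (y' - y) (F (y', z) - F (y, z)) ≤ μ * ‖y' - y‖ ^ 2)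
    (hF_lip : ∀ y z z', ‖F (y, z') - F (y, z)‖ ≤ ℓ * ‖z' - z‖) (y y' : H) (z z' : K) :
    inner ℝ (y' - y) (F (y', z') - F (y, z)) ≤
      (μ + a / 2 * ℓ ^ 2) * ‖y' - y‖ ^ 2 + 1 / (2 * a) * ‖z' - z‖ ^ 2 := by
  have hsplit : F (y', z') - F (y, z) = (F (y', z') - F (y, z')) + (F (y, z') - F (y, z)) := by
    abel
  rw [hsplit, inner_add_right]
  linarith [hF_mono y y' z', real_inner_le_of_lipschitz_snd ha hF_lip (y' - y) y z z']

end

theorem a_priori_estimate_two_general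
    {H K : Type*} [NormedAddCommGroup H] [InnerProductSpace ℝ H]
    [NormedAddCommGroup K] [InnerProductSpace ℝ K]
    (F : H × K → H) (G : H → H) (μ ν ℓ α a : ℝ)
    (hα0 : 0 ≤ α) (hα1 : α ≤ 1) (ha : 0 < a)
    (Φ : H × K → H)
    (hΦ : ∀ y z, Φ (y, z) = α • F (y, z) + (1 - α) • G y)
    (hF_mono : ∀ y y' z, (inner ℝ (y' - y) (F (y', z) - F (y, z)) : ℝ) ≤ μ * ‖y' - y‖ ^ 2)
    (hG_mono : ∀ y y', (inner ℝ (y' - y) (G y' - G y) : ℝ) ≤ ν * ‖y' - y‖ ^ 2)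
    (hF_lip : ∀ y z z', ‖F (y, z') - F (y, z)‖ ≤ ℓ * ‖z' - z‖) :
    ∀ y ytilde : H, ∀ z ztilde : K,
      (inner ℝ (y - ytilde) (Φ (y, z) - Φ (ytilde, ztilde)) : ℝ) ≤
        ((μ + a / 2 * ℓ ^ 2) * α + ν * (1 - α)) * ‖y - ytilde‖ ^ 2
          + α / (2 * a) * ‖z - ztilde‖ ^ 2 := by
  intro y ytilde z ztilde
  have hdiff : Φ (y, z) - Φ (ytilde, ztilde) =
      α • (F (y, z) - F (ytilde, ztilde)) + (1 - α) • (G y - G ytilde) := by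
    rw [hΦ, hΦ, smul_sub, smul_sub]
    abel
  rw [hdiff]
  calc _ ≤ α * ((μ + a / 2 * ℓ ^ 2) * ‖y - ytilde‖ ^ 2 + 1 / (2 * a) * ‖z - ztilde‖ ^ 2)
          + (1 - α) * (ν * ‖y - ytilde‖ ^ 2) :=
        real_inner_convex_combination_le hα0 hα1
          (real_inner_sub_le_of_monotone_fst_of_lipschitz_snd ha hF_mono hF_lip ytilde y ztilde z)
          (hG_mono ytilde y)
    _ = _ := by ring

theorem a_priori_estimate_two
    {H K : Type*} [NormedAddCommGroup H] [InnerProductSpace ℝ H]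
    [NormedAddCommGroup K] [InnerProductSpace ℝ K]
    (F : H × K → H) (G : H → H) (μ ν ℓ α a : ℝ)
    (hℓ : 0 ≤ ℓ) (hα0 : 0 ≤ α) (hα1 : α ≤ 1) (ha : 0 < a)
    (Φ : H × K → H)
    (hΦ : ∀ y z, Φ (y, z) = α • F (y, z) + (1 - α) • G y)
    (hF_mono : ∀ y y' z, (inner ℝ (y' - y) (F (y', z) - F (y, z)) : ℝ) ≤ μ * ‖y' - y‖ ^ 2)
    (hG_mono : ∀ y y', (inner ℝ (y' - y) (G y' - G y) : ℝ) ≤ ν * ‖y' - y‖ ^ 2)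
    (hF_lip : ∀ y z z', ‖F (y, z') - F (y, z)‖ ≤ ℓ * ‖z' - z‖) :
    ∀ y ytilde : H, ∀ z ztilde : K,
      (inner ℝ (y - ytilde) (Φ (y, z) - Φ (ytilde, ztilde)) : ℝ) ≤
        ((μ + a / 2 * ℓ ^ 2) * α + ν * (1 - α)) * ‖y - ytilde‖ ^ 2
          + α / (2 * a) * ‖z - ztilde‖ ^ 2 :=
  a_priori_estimate_two_general F G μ ν ℓ α a hα0 hα1 ha Φ hΦ hF_mono hG_mono hF_lip
end
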